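/- arXiv:2007.10924 — 2 statements merged into one kernel-verified Lean document; each statement's English description precedes it below -/
import Mathlib

section
/- Let f : D → {0,1} be a non-constant n-bit partial Boolean function that depends on k bits. If f can be computed exactly by a quantum 1-query algorithm, then 1 ≤ rank(G_f(1,0)) ≤ n, 1 ≤ rank(G_f(1,1)) ≤ n, and rank(G_f(1,0)) + rank(G_f(1,1)) ≤ 2n + 2 − k. -/
/-!
After one query the amplitudes of `P U₁ O_x U₀ ψ` and `(1 - P) U₁ O_x U₀ ψ` are linear in
`v_x = (1, x₁, …, xₙ)`, so `f x = ∑ᵢ (aᵢ ⬝ᵥ v_x)²` and `1 - f x = ∑ⱼ (bⱼ ⬝ᵥ v_x)²` on `D`, the two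
sums adding up to `1` on the whole cube. The rows `aᵢ` vanish on the span `V₀` of the `v_x` with
`f x = 0` and the `bⱼ` on the span `V₁` of those with `f x = 1`; so neither span is the whole
space. Multilinearizing `∑ᵢ (aᵢ ⬝ᵥ X)²` represents `f` with variables among the `t` whose column
`a•ₜ` is nonzero. Since the full quadratic form is constant on the cube, its off-diagonal
coefficients vanish, which makes the unit vectors `eₜ` of these variables independent modulo
`V₀ ⊓ V₁`; hence `k ≤ codim V₀ + codim V₁`.
-/

open scoped BigOperators

noncomputable section

/-- The quantum oracle `O_x`, as a diagonal matrix acting on `ℂ^{(n+1)m}`, whose basis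
vectors are indexed by pairs `(i, j)` with `i ∈ {0, 1, …, n}` (encoded as `Option (Fin n)`,
`none` playing the role of `0`) and `j ∈ {1, …, m}`. -/
def oracleMat (n m : ℕ) (x : Fin n → Bool) :
    Matrix (Option (Fin n) × Fin m) (Option (Fin n) × Fin m) ℂ :=
  Matrix.diagonal fun p =>
    match p.1 with
    | none => 1
    | some i => if x i then -1 else 1

/-- Squared Euclidean norm of a complex vector. -/
def vecNormSq {ι : Type*} [Fintype ι] (v : ι → ℂ) : ℝ :=
  ∑ i, Complex.normSq (v i)

/-- The partial Boolean function `f` with domain (promised set) `D` is computed exactly by a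
quantum 1-query algorithm: there are `m ≥ 1`, a unit vector `ψ`, unitaries `U₀, U₁` and an
orthogonal projection `P` with `‖P U₁ O_x U₀ ψ‖² = f x` for all `x ∈ D`. -/
def ComputedExactly1 {n : ℕ} (D : Set (Fin n → Bool)) (f : (Fin n → Bool) → Bool) : Prop :=
  ∃ m : ℕ, 1 ≤ m ∧
    ∃ ψ : Option (Fin n) × Fin m → ℂ, vecNormSq ψ = 1 ∧
      ∃ U₀ U₁ P : Matrix (Option (Fin n) × Fin m) (Option (Fin n) × Fin m) ℂ,
        U₀ ∈ Matrix.unitaryGroup (Option (Fin n) × Fin m) ℂ ∧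
        U₁ ∈ Matrix.unitaryGroup (Option (Fin n) × Fin m) ℂ ∧
        P.IsHermitian ∧ P * P = P ∧
        ∀ x ∈ D, vecNormSq ((P * U₁ * oracleMat n m x * U₀).mulVec ψ) = if f x then 1 else 0

/-- A multilinear polynomial: degree at most 1 in each variable. -/
def IsMultilinear {n : ℕ} (p : MvPolynomial (Fin n) ℝ) : Prop :=
  ∀ i, p.degreeOf i ≤ 1

/-- `p` represents the partial Boolean function `f` on the promised set `D`. -/
def Represents {n : ℕ} (p : MvPolynomial (Fin n) ℝ)
    (D : Set (Fin n → Bool)) (f : (Fin n → Bool) → Bool) : Prop :=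
  ∀ x ∈ D, MvPolynomial.eval (fun i => if x i then (1 : ℝ) else 0) p = if f x then 1 else 0

/-- `f` (with domain `D`) depends on `k` bits: `k` is the minimum, over all multilinear
polynomials representing `f`, of the number of variables occurring. -/
def DependsOnBits {n : ℕ} (D : Set (Fin n → Bool)) (f : (Fin n → Bool) → Bool) (k : ℕ) : Prop :=
  IsLeast {c | ∃ p : MvPolynomial (Fin n) ℝ,
    IsMultilinear p ∧ Represents p D f ∧ p.vars.card = c} k

/-- The Fourier basis vector `|F(x)⟩₁ = (1, (−1)^{x_1}, …, (−1)^{x_n})`. -/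
def fourierVec {n : ℕ} (x : Fin n → Bool) : Option (Fin n) → ℂ :=
  fun o => match o with
  | none => 1
  | some i => if x i then -1 else 1

/-- The polynomial basis vector `(1, x₁, …, xₙ)`. -/
def polyVec {n : ℕ} (x : Fin n → Bool) : Option (Fin n) → ℝ :=
  fun o => match o with
  | none => 1
  | some i => if x i then 1 else 0

/-- A degree-1 SOS complex representation matrix of `f` and its negation, given by the
rows `α l` (`l < p` for `f`, `p ≤ l < p + q` for the negation of `f`). -/
def SOSRep {n : ℕ} (D : Set (Fin n → Bool)) (f : (Fin n → Bool) → Bool)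
    (p q : ℕ) (α : Fin (p + q) → Option (Fin n) → ℂ) : Prop :=
  (∀ x ∈ D, ∑ l : Fin p,
      Complex.normSq (∑ i, (starRingEnd ℂ) (α (Fin.castAdd q l) i) * fourierVec x i)
      = if f x then 1 else 0) ∧
  (∀ x ∈ D, ∑ l : Fin q,
      Complex.normSq (∑ i, (starRingEnd ℂ) (α (Fin.natAdd p l) i) * fourierVec x i)
      = if f x then 0 else 1) ∧
  (∀ x : Fin n → Bool, ∑ l : Fin (p + q),
      Complex.normSq (∑ i, (starRingEnd ℂ) (α l i) * fourierVec x i) = 1)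

/-- `rank(G_f(1,b))`: the dimension of the real span of the vectors `(1, x₁, …, xₙ)`
over all `x ∈ D` with `f x = b`. -/
def rankG {n : ℕ} (D : Set (Fin n → Bool)) (f : (Fin n → Bool) → Bool) (b : Bool) : ℕ :=
  Module.finrank ℝ (Submodule.span ℝ (polyVec '' {x ∈ D | f x = b}))

end

open Matrix MvPolynomial

section VecNormSq

variable {ι : Type*} [Fintype ι]

lemma vecNormSq_eq_re_star_dotProduct (z : ι → ℂ) : vecNormSq z = (star z ⬝ᵥ z).re := by
  simp [vecNormSq, dotProduct, Complex.re_sum, Complex.normSq_apply, Complex.mul_re]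

lemma star_mulVec_dotProduct_mulVec (M N : Matrix ι ι ℂ) (y : ι → ℂ) :
    star (M *ᵥ y) ⬝ᵥ (N *ᵥ y) = star y ⬝ᵥ ((Mᴴ * N) *ᵥ y) := by
  rw [star_mulVec, dotProduct_mulVec, dotProduct_mulVec, vecMul_vecMul]

variable [DecidableEq ι]

lemma vecNormSq_unitary_mulVec {U : Matrix ι ι ℂ} (hU : U ∈ unitaryGroup ι ℂ) (z : ι → ℂ) :
    vecNormSq (U *ᵥ z) = vecNormSq z := by
  rw [vecNormSq_eq_re_star_dotProduct, vecNormSq_eq_re_star_dotProduct,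
    star_mulVec_dotProduct_mulVec, ← star_eq_conjTranspose, hU.1, one_mulVec]

lemma vecNormSq_mulVec_add_vecNormSq_one_sub_mulVec {P : Matrix ι ι ℂ} (hP : P.IsHermitian)
    (hP2 : P * P = P) (y : ι → ℂ) :
    vecNormSq (P *ᵥ y) + vecNormSq ((1 - P) *ᵥ y) = vecNormSq y := by
  have hPQ : Pᴴ * (1 - P) = 0 := by rw [hP.eq, mul_sub, mul_one, hP2, sub_self]
  have hQP : (1 - P)ᴴ * P = 0 := by
    rw [conjTranspose_sub, conjTranspose_one, hP.eq, sub_mul, one_mul, hP2, sub_self]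
  have hy : y = P *ᵥ y + (1 - P) *ᵥ y := by rw [sub_mulVec, one_mulVec]; abel
  simp only [vecNormSq_eq_re_star_dotProduct, ← Complex.add_re]
  conv_rhs => rw [hy]
  rw [star_add, add_dotProduct, dotProduct_add, dotProduct_add,
    star_mulVec_dotProduct_mulVec P (1 - P), star_mulVec_dotProduct_mulVec (1 - P) P, hPQ, hQP,
    zero_mulVec, dotProduct_zero, zero_add, add_zero]

end VecNormSq

section Oracle

variable {n m : ℕ}

lemma mulVec_oracleMat_apply (x : Fin n → Bool) (w : Option (Fin n) × Fin m → ℂ)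
    (p : Option (Fin n) × Fin m) : (oracleMat n m x *ᵥ w) p = fourierVec x p.1 * w p :=
  mulVec_diagonal _ _ _

lemma vecNormSq_oracleMat_mulVec (x : Fin n → Bool) (w : Option (Fin n) × Fin m → ℂ) :
    vecNormSq (oracleMat n m x *ᵥ w) = vecNormSq w := by
  have hF : ∀ o, Complex.normSq (fourierVec x o) = 1 := by
    rintro (_ | i)
    · simp [fourierVec]
    · by_cases hx : x i <;> simp [fourierVec, hx]
  simp only [vecNormSq, mulVec_oracleMat_apply, Complex.normSq_mul, hF, one_mul]

/-- Rewrites `c ⬝ᵥ fourierVec x` in the basis `polyVec x`, using `(-1)^{x_i} = 1 - 2 x_i`. -/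
def fourierToPolyCoeff (c : Option (Fin n) → ℂ) : Option (Fin n) → ℂ
  | none => c none + ∑ t, c (some t)
  | some t => -2 * c (some t)

lemma sum_fourierVec_mul (c : Option (Fin n) → ℂ) (x : Fin n → Bool) :
    ∑ o, fourierVec x o * c o = ∑ o, fourierToPolyCoeff c o * (polyVec x o : ℂ) := by
  simp only [Fintype.sum_option, fourierToPolyCoeff, fourierVec, polyVec, Complex.ofReal_one,
    one_mul, mul_one, add_assoc, ← Finset.sum_add_distrib]
  congr 1
  refine Finset.sum_congr rfl fun t _ => ?_
  by_cases hx : x t <;> simp [hx]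
  ring

lemma Complex.normSq_sum_mul_ofReal {σ : Type*} [Fintype σ] (b : σ → ℂ) (v : σ → ℝ) :
    Complex.normSq (∑ o, b o * (v o : ℂ))
      = ((fun o => (b o).re) ⬝ᵥ v) ^ 2 + ((fun o => (b o).im) ⬝ᵥ v) ^ 2 := by
  simp [Complex.normSq_apply, Complex.re_sum, Complex.im_sum, dotProduct, sq]

/-- Each amplitude of `A O_x w` is a complex linear form in `polyVec x`; its real and imaginary
parts give two of the rows. -/
lemma exists_vecNormSq_mulVec_oracleMat_eq_sum_sq
    (A : Matrix (Option (Fin n) × Fin m) (Option (Fin n) × Fin m) ℂ)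
    (w : Option (Fin n) × Fin m → ℂ) :
    ∃ a : (Option (Fin n) × Fin m) × Bool → Option (Fin n) → ℝ, ∀ x,
      vecNormSq (A *ᵥ (oracleMat n m x *ᵥ w)) = ∑ r, (a r ⬝ᵥ polyVec x) ^ 2 := by
  let b r := fourierToPolyCoeff fun o => ∑ j, A r (o, j) * w (o, j)
  refine ⟨fun rs o => if rs.2 then (b rs.1 o).im else (b rs.1 o).re, fun x => ?_⟩
  have hrow : ∀ r, (A *ᵥ (oracleMat n m x *ᵥ w)) r = ∑ o, b r o * (polyVec x o : ℂ) := by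
    intro r
    rw [← sum_fourierVec_mul, mulVec, dotProduct, Fintype.sum_prod_type]
    simp only [mulVec_oracleMat_apply, Finset.mul_sum]
    exact Finset.sum_congr rfl fun o _ => Finset.sum_congr rfl fun j _ => by ring
  simp only [vecNormSq, hrow, Complex.normSq_sum_mul_ofReal, Fintype.sum_prod_type,
    Fintype.sum_bool, if_true, Bool.false_eq_true, if_false, add_comm]

end Oracle

section SumSq

variable {σ ι : Type*} [Fintype σ] [Fintype ι]

lemma dotProduct_eq_zero_of_mem_span {a : ι → σ → ℝ} {S : Set (σ → ℝ)}
    (hS : ∀ v ∈ S, ∑ i, (a i ⬝ᵥ v) ^ 2 = 0) {v : σ → ℝ} (hv : v ∈ Submodule.span ℝ S) (i : ι) :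
    a i ⬝ᵥ v = 0 := by
  induction hv using Submodule.span_induction with
  | mem v hv =>
    exact pow_eq_zero_iff two_ne_zero |>.mp <|
      (Finset.sum_eq_zero_iff_of_nonneg fun i _ => sq_nonneg _).mp (hS v hv) i (Finset.mem_univ i)
  | zero => exact dotProduct_zero _
  | add u v _ _ hu hv => rw [dotProduct_add, hu, hv, add_zero]
  | smul c v _ hv => rw [dotProduct_smul, hv, smul_zero]

lemma finrank_span_lt_card_of_sum_sq {a : ι → σ → ℝ} {S : Set (σ → ℝ)}
    (hS : ∀ v ∈ S, ∑ i, (a i ⬝ᵥ v) ^ 2 = 0) {y : σ → ℝ} (hy : ∑ i, (a i ⬝ᵥ y) ^ 2 ≠ 0) :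
    Module.finrank ℝ (Submodule.span ℝ S) < Fintype.card σ := by
  rw [← Module.finrank_fintype_fun_eq_card ℝ]
  refine Submodule.finrank_lt fun htop => hy ?_
  have hy : y ∈ Submodule.span ℝ S := htop ▸ Submodule.mem_top
  simp [dotProduct_eq_zero_of_mem_span hS hy]

lemma sum_sq_dotProduct_polarization (a : ι → σ → ℝ) (u v w : σ → ℝ) :
    ∑ i, (a i ⬝ᵥ (u + v + w)) ^ 2 - ∑ i, (a i ⬝ᵥ (u + v)) ^ 2 - ∑ i, (a i ⬝ᵥ (u + w)) ^ 2
      + ∑ i, (a i ⬝ᵥ u) ^ 2 = 2 * ∑ i, (a i ⬝ᵥ v) * (a i ⬝ᵥ w) := by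
  simp only [dotProduct_add, Finset.mul_sum, ← Finset.sum_sub_distrib, ← Finset.sum_add_distrib]
  exact Finset.sum_congr rfl fun i _ => by ring

/-- A vector of `U` supported on `T` is killed by `aᵀ a`, which is diagonal with positive
entries on `T`. -/
lemma linearIndependent_mkQ_single [DecidableEq σ] (a : ι → σ → ℝ) {U : Submodule ℝ (σ → ℝ)}
    (hU : ∀ i, ∀ u ∈ U, a i ⬝ᵥ u = 0) {T : Finset σ}
    (horth : ∀ s ∈ T, ∀ t ∈ T, s ≠ t → ∑ i, a i s * a i t = 0)
    (hne : ∀ t ∈ T, ∃ i, a i t ≠ 0) :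
    LinearIndependent ℝ fun t : T => U.mkQ (Pi.single (t : σ) 1) := by
  rw [Fintype.linearIndependent_iff]
  intro g hg t
  set u : σ → ℝ := ∑ s : T, g s • Pi.single (s : σ) 1
  have hu : u ∈ U := by
    rw [← Submodule.Quotient.mk_eq_zero, ← Submodule.mkQ_apply, map_sum]
    simpa only [map_smul] using hg
  have hau : ∀ i, a i ⬝ᵥ u = ∑ s : T, g s * a i s := by
    intro i
    simp [u, dotProduct_sum, dotProduct_smul, dotProduct_single]
  have hdiag : g t * ∑ i, a i t ^ 2 = 0 := by
    calc g t * ∑ i, a i t ^ 2 = ∑ s : T, g s * ∑ i, a i s * a i t := by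
          rw [Fintype.sum_eq_single t fun s hst => by
            rw [horth s s.2 t t.2 (Subtype.coe_injective.ne hst), mul_zero]]
          simp only [sq]
      _ = ∑ i, (a i ⬝ᵥ u) * a i t := by
          simp only [hau, Finset.mul_sum, Finset.sum_mul]
          rw [Finset.sum_comm]
          exact Finset.sum_congr rfl fun _ _ => Finset.sum_congr rfl fun _ _ => by ring
      _ = 0 := by simp [hU _ u hu]
  obtain ⟨i, hi⟩ := hne t t.2
  refine (mul_eq_zero.mp hdiag).resolve_right (ne_of_gt ?_)
  exact Finset.sum_pos' (fun _ _ => sq_nonneg _) ⟨i, Finset.mem_univ i, by positivity⟩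

end SumSq

lemma card_add_finrank_add_finrank_le {K E ι : Type*} [Field K] [AddCommGroup E] [Module K E]
    [FiniteDimensional K E] [Fintype ι] {V₀ V₁ : Submodule K E} {e : ι → E}
    (he : LinearIndependent K fun i => (V₀ ⊓ V₁).mkQ (e i)) :
    Fintype.card ι + Module.finrank K V₀ + Module.finrank K V₁ ≤ 2 * Module.finrank K E := by
  have h₁ := he.fintype_card_le_finrank
  have h₂ := (V₀ ⊓ V₁).finrank_quotient_add_finrank
  have h₃ := Submodule.finrank_sup_add_finrank_inf_eq V₀ V₁
  have h₄ := (V₀ ⊔ V₁).finrank_le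
  omega

section Multilinear

variable {n : ℕ}

lemma isMultilinear_sum {ι : Type*} (s : Finset ι) {p : ι → MvPolynomial (Fin n) ℝ}
    (hp : ∀ i ∈ s, IsMultilinear (p i)) : IsMultilinear (∑ i ∈ s, p i) := fun t =>
  Finset.sum_induction _ (fun q => degreeOf t q ≤ 1)
    (fun _ _ hq hr => (degreeOf_add_le _ _ _).trans (max_le hq hr)) (by simp)
    fun i hi => hp i hi t

lemma IsMultilinear.C_mul {p : MvPolynomial (Fin n) ℝ} (hp : IsMultilinear p) (c : ℝ) :
    IsMultilinear (C c * p) := fun t => (degreeOf_C_mul_le _ _ _).trans (hp t)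

noncomputable def polyVecX : Option (Fin n) → MvPolynomial (Fin n) ℝ
  | none => 1
  | some i => X i

lemma eval_polyVecX (x : Fin n → Bool) (o : Option (Fin n)) :
    eval (fun i => if x i then (1 : ℝ) else 0) (polyVecX o) = polyVec x o := by
  cases o <;> simp [polyVecX, polyVec]

lemma degreeOf_polyVecX (i : Fin n) (o : Option (Fin n)) :
    degreeOf i (polyVecX o) = if o = some i then 1 else 0 := by
  cases o with
  | none => simp [polyVecX]
  | some j => simp [polyVecX, degreeOf_X, eq_comm]

lemma polyVecX_mem_supported {s : Set (Fin n)} {o : Option (Fin n)} (ho : ∀ t, o = some t → t ∈ s) :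
    polyVecX o ∈ supported ℝ s := by
  cases o with
  | none => exact Subalgebra.one_mem _
  | some t => exact (X_mem_supported (R := ℝ)).mpr (ho t rfl)

/-- The multilinear polynomial agreeing with `(a ⬝ᵥ polyVec x) ^ 2` on the Boolean cube:
expand the square and replace each `X i ^ 2` by `X i`. -/
noncomputable def multilinearSq (a : Option (Fin n) → ℝ) : MvPolynomial (Fin n) ℝ :=
  ∑ o, ∑ o', C (a o * a o') *
    if o = o' then polyVecX o else polyVecX o * polyVecX o'

lemma eval_multilinearSq (a : Option (Fin n) → ℝ) (x : Fin n → Bool) :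
    eval (fun i => if x i then (1 : ℝ) else 0) (multilinearSq a) = (a ⬝ᵥ polyVec x) ^ 2 := by
  have hidem : ∀ o, polyVec x o * polyVec x o = polyVec x o := by
    rintro (_ | t)
    · simp [polyVec]
    · by_cases h : x t <;> simp [polyVec, h]
  have hterm : ∀ o o', eval (fun i => if x i then (1 : ℝ) else 0)
      (if o = o' then polyVecX o else polyVecX o * polyVecX o') = polyVec x o * polyVec x o' := by
    intro o o'
    split_ifs with h
    · rw [h, eval_polyVecX, hidem]
    · rw [eval_mul, eval_polyVecX, eval_polyVecX]
  simp only [multilinearSq, eval_sum, eval_mul, eval_C, hterm, sq, dotProduct, Finset.sum_mul_sum]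
  exact Finset.sum_congr rfl fun _ _ => Finset.sum_congr rfl fun _ _ => by ring

lemma isMultilinear_multilinearSq (a : Option (Fin n) → ℝ) : IsMultilinear (multilinearSq a) := by
  refine isMultilinear_sum _ fun o _ => isMultilinear_sum _ fun o' _ => IsMultilinear.C_mul ?_ _
  intro i
  split_ifs with h
  · rw [degreeOf_polyVecX]; split_ifs <;> simp
  · refine (degreeOf_mul_le _ _ _).trans ?_
    rw [degreeOf_polyVecX, degreeOf_polyVecX]
    split_ifs with h₁ h₂ <;> simp_all

lemma multilinearSq_mem_supported {a : Option (Fin n) → ℝ} {s : Set (Fin n)}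
    (hs : ∀ t, a (some t) ≠ 0 → t ∈ s) : multilinearSq a ∈ supported ℝ s := by
  refine Subalgebra.sum_mem _ fun o _ => Subalgebra.sum_mem _ fun o' _ => ?_
  by_cases ha : a o * a o' = 0
  · simp [ha]
  have hmem : ∀ o'', a o'' ≠ 0 → polyVecX o'' ∈ supported ℝ s := fun o'' h =>
    polyVecX_mem_supported fun t ht => hs t (ht ▸ h)
  obtain ⟨ho, ho'⟩ := mul_ne_zero_iff.mp ha
  refine Subalgebra.mul_mem _ (Subalgebra.algebraMap_mem _ _) ?_
  split_ifs
  · exact hmem o ho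
  · exact Subalgebra.mul_mem _ (hmem o ho) (hmem o' ho')

end Multilinear

section SOS

variable {n : ℕ}

lemma rankG_pos {D : Set (Fin n → Bool)} {f : (Fin n → Bool) → Bool} {b : Bool}
    (h : ∃ x ∈ D, f x = b) : 1 ≤ rankG D f b := by
  obtain ⟨x, hx, hfx⟩ := h
  refine Nat.one_le_iff_ne_zero.mpr fun h0 => ?_
  have hmem : polyVec x ∈ Submodule.span ℝ (polyVec '' {x ∈ D | f x = b}) :=
    Submodule.subset_span ⟨x, ⟨hx, hfx⟩, rfl⟩
  rw [rankG, Submodule.finrank_eq_zero] at h0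
  rw [h0, Submodule.mem_bot] at hmem
  simpa [polyVec] using congrFun hmem none

/-- Polarize at the cube points `0`, `eₛ`, `eₜ` and `eₛ + eₜ`. -/
lemma sum_mul_eq_zero_of_sum_sq_polyVec {ι : Type*} [Fintype ι] {a : ι → Option (Fin n) → ℝ}
    (ha : ∀ x, ∑ i, (a i ⬝ᵥ polyVec x) ^ 2 = 1) {s t : Fin n} (hst : s ≠ t) :
    ∑ i, a i (some s) * a i (some t) = 0 := by
  let e : Option (Fin n) → Option (Fin n) → ℝ := fun o => Pi.single o 1
  have h₀ : polyVec (fun _ => false) = e none := by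
    funext o; rcases o with _ | i <;> simp [e, polyVec]
  have h₁ : polyVec (fun i => decide (i = s)) = e none + e (some s) := by
    funext o; rcases o with _ | i <;> simp [e, polyVec, Pi.single_apply]
  have h₂ : polyVec (fun i => decide (i = t)) = e none + e (some t) := by
    funext o; rcases o with _ | i <;> simp [e, polyVec, Pi.single_apply]
  have h₃ : polyVec (fun i => decide (i = s ∨ i = t)) = e none + e (some s) + e (some t) := by
    funext o; rcases o with _ | i
    · simp [e, polyVec]
    · by_cases his : i = s <;> by_cases hit : i = t <;> simp_all [e, polyVec]
  have hpol := sum_sq_dotProduct_polarization a (e none) (e (some s)) (e (some t))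
  rw [← h₃, ← h₁, ← h₂, ← h₀, ha, ha, ha, ha] at hpol
  simpa [e, dotProduct_single] using hpol.symm

/-- The real form of `SOSRep`: each complex row splits into its real and imaginary parts,
written in the basis `polyVec x` instead of `fourierVec x`. -/
structure RealSOSRep (D : Set (Fin n → Bool)) (f : (Fin n → Bool) → Bool) {ι κ : Type*}
    [Fintype ι] [Fintype κ] (a₀ : ι → Option (Fin n) → ℝ) (a₁ : κ → Option (Fin n) → ℝ) :
    Prop where
  sum_sq₀ : ∀ x ∈ D, ∑ i, (a₀ i ⬝ᵥ polyVec x) ^ 2 = if f x then 1 else 0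
  sum_sq₁ : ∀ x ∈ D, ∑ j, (a₁ j ⬝ᵥ polyVec x) ^ 2 = if f x then 0 else 1
  sum_sq_add_sum_sq : ∀ x, ∑ i, (a₀ i ⬝ᵥ polyVec x) ^ 2 + ∑ j, (a₁ j ⬝ᵥ polyVec x) ^ 2 = 1

theorem ComputedExactly1.exists_realSOSRep {D : Set (Fin n → Bool)} {f : (Fin n → Bool) → Bool}
    (h : ComputedExactly1 D f) :
    ∃ m, ∃ a₀ a₁ : (Option (Fin n) × Fin m) × Bool → Option (Fin n) → ℝ, RealSOSRep D f a₀ a₁ := by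
  obtain ⟨m, -, ψ, hψ, U₀, U₁, P, hU₀, hU₁, hP, hP2, hf⟩ := h
  obtain ⟨a₀, ha₀⟩ := exists_vecNormSq_mulVec_oracleMat_eq_sum_sq (P * U₁) (U₀ *ᵥ ψ)
  obtain ⟨a₁, ha₁⟩ := exists_vecNormSq_mulVec_oracleMat_eq_sum_sq ((1 - P) * U₁) (U₀ *ᵥ ψ)
  have hsum₀ : ∀ x ∈ D, ∑ r, (a₀ r ⬝ᵥ polyVec x) ^ 2 = if f x then 1 else 0 := fun x hx => by
    rw [← ha₀, ← hf x hx, mulVec_mulVec, mulVec_mulVec, Matrix.mul_assoc, Matrix.mul_assoc]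
  have htotal : ∀ x, ∑ r, (a₀ r ⬝ᵥ polyVec x) ^ 2 + ∑ r, (a₁ r ⬝ᵥ polyVec x) ^ 2 = 1 := by
    intro x
    rw [← ha₀, ← ha₁, ← mulVec_mulVec, ← mulVec_mulVec,
      vecNormSq_mulVec_add_vecNormSq_one_sub_mulVec hP hP2, vecNormSq_unitary_mulVec hU₁,
      vecNormSq_oracleMat_mulVec, vecNormSq_unitary_mulVec hU₀, hψ]
  refine ⟨m, a₀, a₁, hsum₀, fun x hx => ?_, htotal⟩
  have := htotal x
  rw [hsum₀ x hx] at this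
  split_ifs at this ⊢ <;> linarith

namespace RealSOSRep

variable {D : Set (Fin n → Bool)} {f : (Fin n → Bool) → Bool} {ι κ : Type*} [Fintype ι]
  [Fintype κ] {a₀ : ι → Option (Fin n) → ℝ} {a₁ : κ → Option (Fin n) → ℝ}

lemma sum_sq₀_eq_zero (h : RealSOSRep D f a₀ a₁) :
    ∀ v ∈ polyVec '' {x ∈ D | f x = false}, ∑ i, (a₀ i ⬝ᵥ v) ^ 2 = 0 := by
  rintro _ ⟨x, ⟨hx, hfx⟩, rfl⟩
  simpa [hfx] using h.sum_sq₀ x hx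

lemma sum_sq₁_eq_zero (h : RealSOSRep D f a₀ a₁) :
    ∀ v ∈ polyVec '' {x ∈ D | f x = true}, ∑ j, (a₁ j ⬝ᵥ v) ^ 2 = 0 := by
  rintro _ ⟨x, ⟨hx, hfx⟩, rfl⟩
  simpa [hfx] using h.sum_sq₁ x hx

lemma rankG_false_le (h : RealSOSRep D f a₀ a₁) {y : Fin n → Bool} (hy : y ∈ D)
    (hfy : f y = true) : rankG D f false ≤ n := by
  have := finrank_span_lt_card_of_sum_sq h.sum_sq₀_eq_zero (y := polyVec y)
    (by simp [h.sum_sq₀ y hy, hfy])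
  simpa [rankG, Nat.lt_succ_iff] using this

lemma rankG_true_le (h : RealSOSRep D f a₀ a₁) {x : Fin n → Bool} (hx : x ∈ D)
    (hfx : f x = false) : rankG D f true ≤ n := by
  have := finrank_span_lt_card_of_sum_sq h.sum_sq₁_eq_zero (y := polyVec x)
    (by simp [h.sum_sq₁ x hx, hfx])
  simpa [rankG, Nat.lt_succ_iff] using this

/-- The unit vectors of the variables of `∑ i, multilinearSq (a₀ i)` are independent modulo
`V₀ ⊓ V₁`, which bounds their number by the two codimensions. -/
lemma add_rankG_add_rankG_le (h : RealSOSRep D f a₀ a₁) {k : ℕ} (hdep : DependsOnBits D f k) :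
    k + rankG D f false + rankG D f true ≤ 2 * (n + 1) := by
  classical
  let T := Finset.univ.filter fun t : Fin n => ∃ i, a₀ i (some t) ≠ 0
  let p := ∑ i, multilinearSq (a₀ i)
  have hp : p ∈ supported ℝ (T : Set (Fin n)) := Subalgebra.sum_mem _ fun i _ =>
    multilinearSq_mem_supported fun t ht => by simpa [T] using ⟨i, ht⟩
  have hk : k ≤ T.card := by
    refine (hdep.2 ⟨p, isMultilinear_sum _ fun i _ => isMultilinear_multilinearSq _,
      fun x hx => ?_, rfl⟩).trans (Finset.card_le_card (by exact_mod_cast mem_supported.mp hp))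
    simpa [p, eval_sum, eval_multilinearSq] using h.sum_sq₀ x hx
  let a := Sum.elim a₀ a₁
  have hU : ∀ l, ∀ u ∈ Submodule.span ℝ (polyVec '' {x ∈ D | f x = false}) ⊓
      Submodule.span ℝ (polyVec '' {x ∈ D | f x = true}), a l ⬝ᵥ u = 0
    | .inl i, _, hu => dotProduct_eq_zero_of_mem_span h.sum_sq₀_eq_zero hu.1 i
    | .inr j, _, hu => dotProduct_eq_zero_of_mem_span h.sum_sq₁_eq_zero hu.2 j
  have horth : ∀ s ∈ T.map .some, ∀ t ∈ T.map .some, s ≠ t → ∑ l, a l s * a l t = 0 := by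
    simp only [Finset.mem_map, Function.Embedding.some_apply]
    rintro _ ⟨s, -, rfl⟩ _ ⟨t, -, rfl⟩ hst
    refine sum_mul_eq_zero_of_sum_sq_polyVec (fun x => ?_) (fun h => hst (h ▸ rfl))
    simpa [a, Fintype.sum_sum_type] using h.sum_sq_add_sum_sq x
  have hne : ∀ t ∈ T.map .some, ∃ l, a l t ≠ 0 := by
    simp only [Finset.mem_map, Function.Embedding.some_apply]
    rintro _ ⟨t, ht, rfl⟩
    obtain ⟨i, hi⟩ := (Finset.mem_filter.mp ht).2
    exact ⟨.inl i, hi⟩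
  have := card_add_finrank_add_finrank_le (linearIndependent_mkQ_single a hU horth hne)
  simp only [Fintype.card_coe, Finset.card_map, Module.finrank_fintype_fun_eq_card,
    Fintype.card_option, Fintype.card_fin] at this
  rw [rankG, rankG]
  omega

end RealSOSRep

end SOS

theorem stmt_8 (n k : ℕ) (D : Set (Fin n → Bool)) (f : (Fin n → Bool) → Bool)
    (hnc : (∃ x ∈ D, f x = false) ∧ (∃ y ∈ D, f y = true))
    (hdep : DependsOnBits D f k)
    (h : ComputedExactly1 D f) :
    1 ≤ rankG D f false ∧ rankG D f false ≤ n ∧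
    1 ≤ rankG D f true ∧ rankG D f true ≤ n ∧
    (rankG D f false : ℤ) + (rankG D f true : ℤ) ≤ 2 * n + 2 - k := by
  obtain ⟨m, a₀, a₁, hrep⟩ := h.exists_realSOSRep
  obtain ⟨⟨x, hx, hfx⟩, ⟨y, hy, hfy⟩⟩ := hnc
  have hsum := hrep.add_rankG_add_rankG_le hdep
  refine ⟨rankG_pos ⟨x, hx, hfx⟩, hrep.rankG_false_le hy hfy, rankG_pos ⟨y, hy, hfy⟩,
    hrep.rankG_true_le hx hfx, ?_⟩
  omega
end

section
/- Let f : D → {0,1} be a non-constant n-bit partial Boolean function. Then f can be computed exactly by a quantum 1-query algorithm if and only if there exist m ≥ 1 and a unit vector φ ∈ ℂ^{(n+1)m} such that ⟨O_x φ, O_y φ⟩ = 0 for every x ∈ D with f(x) = 0 and every y ∈ D with f(y) = 1. -/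
open scoped BigOperators

/-!
If `P U₁ O_x U₀ ψ` has squared norm `f x`, then with `φ = U₀ ψ` the unit vectors `U₁ O_x φ` lie
in `ker P` when `f x = 0` and in `range P` when `f x = 1` (a unit vector whose projection is again
a unit vector is fixed by the projection); as `range P ⟂ ker P` and `U₁` preserves inner products,
`O_x φ ⟂ O_y φ`. Conversely, given such a `φ`, take `U₀ = U₁ = 1` and let `P` be the orthogonal
projection onto the span of the states `O_y φ` with `f y = 1`.
-/

open Matrix WithLp

section Euclidean

variable {ι : Type*} [Fintype ι]

lemma vecNormSq_eq_norm_sq (v : ι → ℂ) : vecNormSq v = ‖toLp 2 v‖ ^ 2 := by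
  simp [vecNormSq, EuclideanSpace.norm_sq_eq, Complex.normSq_eq_norm_sq]

lemma sum_conj_mul_eq_inner (u v : ι → ℂ) :
    ∑ i, starRingEnd ℂ (u i) * v i = inner ℂ (toLp 2 u) (toLp 2 v) := by
  simp [EuclideanSpace.inner_toLp_toLp, dotProduct, mul_comm]

variable [DecidableEq ι]

lemma Matrix.toEuclideanCLM_mem_unitary {U : Matrix ι ι ℂ} (hU : U ∈ unitaryGroup ι ℂ) :
    toEuclideanCLM (𝕜 := ℂ) U ∈ unitary (EuclideanSpace ℂ ι →L[ℂ] EuclideanSpace ℂ ι) :=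
  Unitary.map_mem _ hU

lemma Matrix.norm_toLp_mulVec_of_mem_unitaryGroup {U : Matrix ι ι ℂ}
    (hU : U ∈ unitaryGroup ι ℂ) (v : ι → ℂ) : ‖toLp 2 (U *ᵥ v)‖ = ‖toLp 2 v‖ :=
  ContinuousLinearMap.norm_map_of_mem_unitary (toEuclideanCLM_mem_unitary hU) _

lemma Matrix.inner_toLp_mulVec_of_mem_unitaryGroup {U : Matrix ι ι ℂ}
    (hU : U ∈ unitaryGroup ι ℂ) (u v : ι → ℂ) :
    inner ℂ (toLp 2 (U *ᵥ u)) (toLp 2 (U *ᵥ v)) = inner ℂ (toLp 2 u) (toLp 2 v) :=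
  ContinuousLinearMap.inner_map_map_of_mem_unitary (toEuclideanCLM_mem_unitary hU) _ _

lemma Matrix.IsHermitian.isStarProjection_toEuclideanCLM {P : Matrix ι ι ℂ}
    (hP : P.IsHermitian) (hPP : P * P = P) : IsStarProjection (toEuclideanCLM (𝕜 := ℂ) P) :=
  IsStarProjection.map ⟨hPP, hP.isSelfAdjoint⟩ _

lemma Submodule.exists_matrix_starProjection (K : Submodule ℂ (EuclideanSpace ℂ ι)) :
    ∃ P : Matrix ι ι ℂ, P.IsHermitian ∧ P * P = P ∧
      ∀ v, toLp 2 (P *ᵥ v) = K.starProjection (toLp 2 v) := by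
  have hP := (isStarProjection_starProjection (U := K)).map
    (toEuclideanCLM (n := ι) (𝕜 := ℂ)).symm.toStarAlgHom
  refine ⟨_, hP.isSelfAdjoint.isHermitian, hP.isIdempotentElem, fun v => ?_⟩
  rw [← toEuclideanCLM_toLp]
  exact congr($(StarAlgEquiv.apply_symm_apply _ K.starProjection) (toLp 2 v))

end Euclidean

lemma IsStarProjection.inner_eq_zero {E : Type*} [NormedAddCommGroup E] [InnerProductSpace ℂ E]
    [CompleteSpace E] {p : E →L[ℂ] E} (hp : IsStarProjection p) {u v : E} (hu : p u = 0)
    (hv : ‖p v‖ = ‖v‖) : inner ℂ u v = 0 := by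
  obtain ⟨_, hp⟩ := isStarProjection_iff_eq_starProjection_range.mp hp
  rw [hp] at hu hv
  exact Submodule.inner_left_of_mem_orthogonal
    ((p.range.mem_iff_norm_starProjection v).mpr hv)
    ((p.range.starProjection_apply_eq_zero_iff).mp hu)

lemma oracleMat_mem_unitaryGroup (n m : ℕ) (x : Fin n → Bool) :
    oracleMat n m x ∈ unitaryGroup (Option (Fin n) × Fin m) ℂ := by
  rw [mem_unitaryGroup_iff', star_eq_conjTranspose, oracleMat, diagonal_conjTranspose,
    diagonal_mul_diagonal, ← diagonal_one]
  congr 1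
  funext ⟨i, j⟩
  rcases i with _ | i
  · simp
  · cases hx : x i <;> simp [hx]

section

variable {n : ℕ} {D : Set (Fin n → Bool)} {f : (Fin n → Bool) → Bool}

lemma ComputedExactly1.exists_orthogonal_oracle_states (h : ComputedExactly1 D f) :
    ∃ m : ℕ, 1 ≤ m ∧ ∃ φ : Option (Fin n) × Fin m → ℂ, vecNormSq φ = 1 ∧
      ∀ x ∈ D, f x = false → ∀ y ∈ D, f y = true →
        ∑ i, (starRingEnd ℂ) ((oracleMat n m x).mulVec φ i)
          * (oracleMat n m y).mulVec φ i = 0 := by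
  obtain ⟨m, hm, ψ, hψ, U₀, U₁, P, hU₀, hU₁, hP, hPP, hrun⟩ := h
  set w : (Fin n → Bool) → EuclideanSpace ℂ (Option (Fin n) × Fin m) :=
    fun x => toLp 2 (U₁ *ᵥ (oracleMat n m x *ᵥ (U₀ *ᵥ ψ)))
  have hψ' : ‖toLp 2 ψ‖ = 1 :=
    (pow_eq_one_iff_of_nonneg (norm_nonneg _) two_ne_zero).mp (vecNormSq_eq_norm_sq ψ ▸ hψ)
  have hw : ∀ x, ‖w x‖ = 1 := fun x => by
    rw [norm_toLp_mulVec_of_mem_unitaryGroup hU₁,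
      norm_toLp_mulVec_of_mem_unitaryGroup (oracleMat_mem_unitaryGroup n m x),
      norm_toLp_mulVec_of_mem_unitaryGroup hU₀, hψ']
  have hPw : ∀ x ∈ D, ‖toEuclideanCLM (𝕜 := ℂ) P (w x)‖ ^ 2 = if f x then 1 else 0 :=
    fun x hx => by
      rw [← hrun x hx, vecNormSq_eq_norm_sq, toEuclideanCLM_toLp]
      simp only [mulVec_mulVec, Matrix.mul_assoc]
  refine ⟨m, hm, U₀ *ᵥ ψ, ?_, fun x hx hfx y hy hfy => ?_⟩
  · rw [vecNormSq_eq_norm_sq, norm_toLp_mulVec_of_mem_unitaryGroup hU₀, hψ', one_pow]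
  rw [sum_conj_mul_eq_inner, ← inner_toLp_mulVec_of_mem_unitaryGroup hU₁]
  refine (hP.isStarProjection_toEuclideanCLM hPP).inner_eq_zero ?_ ?_
  · have := hPw x hx
    simp only [hfx, Bool.false_eq_true, if_false, ne_eq, OfNat.ofNat_ne_zero, not_false_eq_true,
      pow_eq_zero_iff, norm_eq_zero] at this
    exact this
  · have := hPw y hy
    rw [hfy, if_pos rfl, pow_eq_one_iff_of_nonneg (norm_nonneg _) two_ne_zero] at this
    rw [this, hw y]

lemma computedExactly1_of_orthogonal_oracle_states {m : ℕ} (hm : 1 ≤ m)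
    {φ : Option (Fin n) × Fin m → ℂ} (hφ : vecNormSq φ = 1)
    (horth : ∀ x ∈ D, f x = false → ∀ y ∈ D, f y = true →
      ∑ i, (starRingEnd ℂ) ((oracleMat n m x).mulVec φ i) * (oracleMat n m y).mulVec φ i = 0) :
    ComputedExactly1 D f := by
  set v : (Fin n → Bool) → EuclideanSpace ℂ (Option (Fin n) × Fin m) :=
    fun x => toLp 2 (oracleMat n m x *ᵥ φ)
  set K := Submodule.span ℂ (v '' {y | y ∈ D ∧ f y = true})
  obtain ⟨P, hP, hPP, hPK⟩ := K.exists_matrix_starProjection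
  refine ⟨m, hm, φ, hφ, 1, 1, P, one_mem _, one_mem _, hP, hPP, fun x hx => ?_⟩
  rw [Matrix.mul_one, Matrix.mul_one, ← mulVec_mulVec, vecNormSq_eq_norm_sq, hPK]
  cases hfx : f x
  · have hxK : Submodule.span ℂ {v x} ⟂ K := Submodule.isOrtho_span.mpr <| by
      rintro _ rfl _ ⟨y, ⟨hy, hfy⟩, rfl⟩
      rw [← sum_conj_mul_eq_inner]
      exact horth x hx hfx y hy hfy
    rw [K.starProjection_apply_eq_zero_iff.mpr (hxK.le (Submodule.mem_span_singleton_self _))]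
    simp
  · rw [K.starProjection_eq_self_iff.mpr (Submodule.subset_span ⟨x, ⟨hx, hfx⟩, rfl⟩),
      norm_toLp_mulVec_of_mem_unitaryGroup (oracleMat_mem_unitaryGroup n m x),
      ← vecNormSq_eq_norm_sq, hφ, if_pos rfl]

end

theorem stmt_17_general (n : ℕ) (D : Set (Fin n → Bool)) (f : (Fin n → Bool) → Bool) :
    ComputedExactly1 D f ↔
      ∃ m : ℕ, 1 ≤ m ∧ ∃ φ : Option (Fin n) × Fin m → ℂ, vecNormSq φ = 1 ∧
        ∀ x ∈ D, f x = false → ∀ y ∈ D, f y = true →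
          ∑ i, (starRingEnd ℂ) ((oracleMat n m x).mulVec φ i)
            * (oracleMat n m y).mulVec φ i = 0 := by
  refine ⟨ComputedExactly1.exists_orthogonal_oracle_states, ?_⟩
  rintro ⟨m, hm, φ, hφ, horth⟩
  exact computedExactly1_of_orthogonal_oracle_states hm hφ horth

theorem stmt_17 (n : ℕ) (D : Set (Fin n → Bool)) (f : (Fin n → Bool) → Bool)
    (hnc : (∃ x ∈ D, f x = false) ∧ (∃ y ∈ D, f y = true)) :
    ComputedExactly1 D f ↔
      ∃ m : ℕ, 1 ≤ m ∧ ∃ φ : Option (Fin n) × Fin m → ℂ, vecNormSq φ = 1 ∧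
        ∀ x ∈ D, f x = false → ∀ y ∈ D, f y = true →
          ∑ i, (starRingEnd ℂ) ((oracleMat n m x).mulVec φ i)
            * (oracleMat n m y).mulVec φ i = 0 :=
  stmt_17_general n D f
end
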